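/- Let B be a trimmed weighted automaton over the max-plus semiring (ℕ ∪ {−∞}, max, +) whose semantics is the function f(w) = Σᵢ max(|wᵢ|_a, |wᵢ|_b) for w = w₀ c w₁ c ⋯ c wₙ with wᵢ ∈ {a,b}*. Then every self-loop transition δ = (q, v, q) with v ∈ {a,b,c} has weight wgt(δ) ∈ {0,1}. -/

import Mathlib

/-!
Pumping a self-loop `(q, v, q)` of weight `k` through an accepting run that visits `q` (which
exists because the automaton is trimmed) gives, for every `n`, an accepting run of weight at
least `n k` on a word `u vⁿ w'` with `|u w'|` fixed. Each letter contributes at most `1` to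
`fmax`, so `n k ≤ fmax (u vⁿ w') ≤ n + |u w'|`, and taking `n > |u w'|` forces `k ≤ 1`.
-/

variable {Q Q' A R : Type*}

/-- `RunFrom Δ p w ρ`: `ρ` is the list of states visited after `p` along a run
reading `w` that starts in `p`. -/
def RunFrom (Δ : Q → A → Q → Prop) : Q → List A → List Q → Prop
  | _, [], [] => True
  | p, a :: w, q :: ρ => Δ p a q ∧ RunFrom Δ q w ρ
  | _, _, _ => False

/-- There is a run from `p` to `q` reading `w`. -/
def HasRun (Δ : Q → A → Q → Prop) (p : Q) (w : List A) (q : Q) : Prop :=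
  ∃ ρ, RunFrom Δ p w ρ ∧ (p :: ρ).getLast (List.cons_ne_nil _ _) = q

/-- `m`-fold power of a word. -/
def wpow (u : List A) (m : ℕ) : List A := (List.replicate m u).flatten

/-- Aperiodicity of a nondeterministic automaton. -/
def Aperiodic (Δ : Q → A → Q → Prop) : Prop :=
  ∃ m, 1 ≤ m ∧ ∀ (p q : Q) (u : List A), u ≠ [] →
    (HasRun Δ p (wpow u m) q ↔ HasRun Δ p (wpow u (m + 1)) q)

/-- `p` and `q` are in the same strongly connected component. -/
def SameSCC (Δ : Q → A → Q → Prop) (p q : Q) : Prop :=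
  p = q ∨ ((∃ u : List A, u ≠ [] ∧ HasRun Δ p u q) ∧ (∃ v : List A, v ≠ [] ∧ HasRun Δ q v p))

/-- The automaton is unambiguous from `p` to `q`. -/
def UnambFromTo (Δ : Q → A → Q → Prop) (p q : Q) : Prop :=
  ∀ (u : List A) (ρ₁ ρ₂ : List Q), u ≠ [] →
    RunFrom Δ p u ρ₁ → RunFrom Δ p u ρ₂ →
    (p :: ρ₁).getLast (List.cons_ne_nil _ _) = q →
    (p :: ρ₂).getLast (List.cons_ne_nil _ _) = q → ρ₁ = ρ₂

def SCCUnambiguous (Δ : Q → A → Q → Prop) : Prop :=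
  ∀ p q : Q, SameSCC Δ p q → UnambFromTo Δ p q

/-- The set of accepting runs on `w`, represented as pairs of an initial state and
the list of subsequently visited states. -/
def AccRuns (Δ : Q → A → Q → Prop) (I F : Set Q) (w : List A) : Set (Q × List Q) :=
  {x | x.1 ∈ I ∧ RunFrom Δ x.1 w x.2 ∧ (x.1 :: x.2).getLast (List.cons_ne_nil _ _) ∈ F}

/-- The sequence of weights along a run. -/
def wgtSeq (wgt : Q → A → Q → R) : Q → List A → List Q → List R
  | p, a :: w, q :: ρ => wgt p a q :: wgtSeq wgt q w ρ
  | _, _, _ => []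


/-- The three-letter alphabet `{a, b, c}`. -/
inductive ABC
  | a | b | c
deriving DecidableEq

/-- `fmax w = Σᵢ max(|wᵢ|_a, |wᵢ|_b)` where `w = w₀ c w₁ c ⋯ c wₙ` with
`wᵢ ∈ {a,b}*`. -/
def fmax (w : List ABC) : ℕ :=
  ((w.splitOn ABC.c).map fun v => max (v.count ABC.a) (v.count ABC.b)).sum

variable {α : Type*}

namespace List

theorem sublist_intersperse (sep : α) : ∀ l : List α, l <+ l.intersperse sep
  | [] | [_] => Sublist.refl _
  | a :: b :: l => by
    rw [intersperse_cons_cons]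
    exact ((sublist_intersperse sep (b :: l)).cons sep).cons_cons a

theorem flatten_sublist_intercalate (sep : List α) (l : List (List α)) :
    l.flatten <+ sep.intercalate l :=
  (sublist_intersperse sep l).flatten

theorem sum_map_length_splitOn_le [BEq α] [LawfulBEq α] (x : α) (l : List α) :
    ((l.splitOn x).map length).sum ≤ l.length := by
  rw [← length_flatten]
  conv_rhs => rw [← intercalate_splitOn (xs := l) x]
  exact (flatten_sublist_intercalate _ _).length_le

theorem getLast_cons_append_of_getLast_eq (p q : α) (l₁ l₂ : List α)
    (h : (p :: l₁).getLast (cons_ne_nil _ _) = q) :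
    (p :: (l₁ ++ l₂)).getLast (cons_ne_nil _ _) = (q :: l₂).getLast (cons_ne_nil _ _) := by
  subst h
  cases l₂ with
  | nil => simp
  | cons r l₂ =>
    simp only [← cons_append]
    exact getLast_append_of_right_ne_nil _ _ (cons_ne_nil _ _)

theorem getLast_cons_replicate (q : α) (n : ℕ) :
    (q :: replicate n q).getLast (cons_ne_nil _ _) = q := by
  simpa only [← replicate_succ] using getLast_replicate_succ n q

end List

theorem fmax_le_length (w : List ABC) : fmax w ≤ w.length :=
  calc fmax w ≤ ((w.splitOn ABC.c).map List.length).sum :=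
        List.sum_le_sum fun _ _ => max_le (List.count_le_length ..) (List.count_le_length ..)
    _ ≤ w.length := List.sum_map_length_splitOn_le _ _

namespace RunFrom

variable {Δ : Q → A → Q → Prop}

theorem length_eq :
    ∀ {p : Q} {w : List A} {ρ : List Q}, RunFrom Δ p w ρ → ρ.length = w.length
  | _, [], [], _ => rfl
  | _, _ :: _, _ :: _, h => congrArg Nat.succ (length_eq h.2)
  | _, [], _ :: _, h | _, _ :: _, [], h => h.elim

theorem append : ∀ {p : Q} {u w : List A} {ρ₁ ρ₂ : List Q}, RunFrom Δ p u ρ₁ →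
    RunFrom Δ ((p :: ρ₁).getLast (List.cons_ne_nil _ _)) w ρ₂ →
    RunFrom Δ p (u ++ w) (ρ₁ ++ ρ₂)
  | _, [], _, [], _, _, h₂ => h₂
  | _, _ :: _, _, _ :: _, _, h₁, h₂ =>
    ⟨h₁.1, h₁.2.append (by rwa [List.getLast_cons (List.cons_ne_nil _ _)] at h₂)⟩
  | _, [], _, _ :: _, _, h₁, _ | _, _ :: _, _, [], _, h₁, _ => h₁.elim

theorem replicate {q : Q} {v : A} (h : Δ q v q) :
    ∀ n : ℕ, RunFrom Δ q (List.replicate n v) (List.replicate n q)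
  | 0 => trivial
  | n + 1 => ⟨h, replicate h n⟩

theorem exists_split_of_mem : ∀ {p : Q} {w : List A} {ρ : List Q} {q : Q},
    RunFrom Δ p w ρ → q ∈ p :: ρ →
    ∃ u w' ρ₁ ρ₂, w = u ++ w' ∧ ρ = ρ₁ ++ ρ₂ ∧ RunFrom Δ p u ρ₁ ∧
      (p :: ρ₁).getLast (List.cons_ne_nil _ _) = q ∧ RunFrom Δ q w' ρ₂
  | _, w, ρ, _, h, .head _ => ⟨[], w, [], ρ, rfl, rfl, trivial, rfl, h⟩
  | _, a :: w, q' :: ρ, _, h, .tail _ hq => by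
    obtain ⟨u, w', ρ₁, ρ₂, rfl, rfl, hu, hlast, hw'⟩ := exists_split_of_mem h.2 hq
    exact ⟨a :: u, w', q' :: ρ₁, ρ₂, rfl, rfl, ⟨h.1, hu⟩,
      by rwa [List.getLast_cons (List.cons_ne_nil _ _)], hw'⟩
  | _, [], _ :: _, _, h, .tail _ _ | _, _ :: _, [], _, h, .tail _ _ => h.elim

end RunFrom

section wgtSeq

variable (wgt : Q → A → Q → R)

theorem wgtSeq_append :
    ∀ (p : Q) (u w : List A) (ρ₁ ρ₂ : List Q), ρ₁.length = u.length →
    wgtSeq wgt p (u ++ w) (ρ₁ ++ ρ₂) =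
      wgtSeq wgt p u ρ₁ ++ wgtSeq wgt ((p :: ρ₁).getLast (List.cons_ne_nil _ _)) w ρ₂
  | _, [], _, [], _, _ => rfl
  | p, a :: u, w, q :: ρ₁, ρ₂, h => by
    rw [List.getLast_cons (List.cons_ne_nil _ _)]
    exact congrArg (wgt p a q :: ·) (wgtSeq_append q u w ρ₁ ρ₂ (Nat.succ.inj h))
  | _, [], _, _ :: _, _, h | _, _ :: _, _, [], _, h => nomatch h

theorem wgtSeq_replicate (q : Q) (v : A) : ∀ n : ℕ,
    wgtSeq wgt q (List.replicate n v) (List.replicate n q) = List.replicate n (wgt q v q)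
  | 0 => rfl
  | n + 1 => congrArg (wgt q v q :: ·) (wgtSeq_replicate q v n)

end wgtSeq

theorem exists_accRuns_pump [AddMonoid R] {Δ : Q → A → Q → Prop} (wgt : Q → A → Q → R)
    {I F : Set Q} {w : List A} {x : Q × List Q} {q : Q} {v : A}
    (hx : x ∈ AccRuns Δ I F w) (hq : q ∈ x.1 :: x.2) (hloop : Δ q v q) :
    ∃ (u w' : List A) (r s : R), u.length + w'.length = w.length ∧
      ∀ n : ℕ, ∃ y ∈ AccRuns Δ I F (u ++ List.replicate n v ++ w'),
        (wgtSeq wgt y.1 (u ++ List.replicate n v ++ w') y.2).sum = r + n • wgt q v q + s := by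
  obtain ⟨p, ρ⟩ := x
  obtain ⟨hI, hrun, hF⟩ :
      p ∈ I ∧ RunFrom Δ p w ρ ∧ (p :: ρ).getLast (List.cons_ne_nil _ _) ∈ F := hx
  obtain ⟨u, w', ρ₁, ρ₂, rfl, rfl, hu, hlast, hw'⟩ := hrun.exists_split_of_mem hq
  refine ⟨u, w', (wgtSeq wgt p u ρ₁).sum, (wgtSeq wgt q w' ρ₂).sum,
    List.length_append.symm,
    fun n => ⟨(p, ρ₁ ++ (List.replicate n q ++ ρ₂)), ⟨hI, ?_, ?_⟩, ?_⟩⟩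
  · rw [List.append_assoc]
    refine hu.append (hlast ▸ (RunFrom.replicate hloop n).append ?_)
    rwa [List.getLast_cons_replicate]
  · rwa [List.getLast_cons_append_of_getLast_eq p q _ _ hlast,
      List.getLast_cons_append_of_getLast_eq q q _ _ (List.getLast_cons_replicate q n),
      ← List.getLast_cons_append_of_getLast_eq p q _ _ hlast]
  · rw [List.append_assoc, wgtSeq_append wgt p _ _ _ _ hu.length_eq, hlast,
      wgtSeq_append wgt q _ _ _ _ (by simp only [List.length_replicate]),
      List.getLast_cons_replicate, wgtSeq_replicate]
    simp only [List.sum_append, List.sum_replicate, add_assoc]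

theorem selfLoop_weight_le_one_general (Δ : Q → ABC → Q → Prop)
    (wgt : Q → ABC → Q → ℕ) (I F : Set Q)
    (htrim : ∀ q : Q, ∃ (w : List ABC) (x : Q × List Q),
      x ∈ AccRuns Δ I F w ∧ q ∈ x.1 :: x.2)
    (hsem : ∀ w : List ABC, w ≠ [] →
      IsGreatest {v : ℕ | ∃ x ∈ AccRuns Δ I F w, (wgtSeq wgt x.1 w x.2).sum = v}
        (fmax w)) :
    ∀ (q : Q) (v : ABC), Δ q v q → wgt q v q = 0 ∨ wgt q v q = 1 := by
  intro q v hloop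
  obtain ⟨w, x, hx, hq⟩ := htrim q
  obtain ⟨u, w', r, s, hlen, hpump⟩ := exists_accRuns_pump wgt hx hq hloop
  set n := w.length + 1 with hn
  obtain ⟨y, hy, hsum⟩ := hpump n
  have hne : u ++ List.replicate n v ++ w' ≠ [] := by simp [n]
  have hbound : n * wgt q v q ≤ n + w.length :=
    calc n * wgt q v q ≤ r + n • wgt q v q + s := by rw [smul_eq_mul]; omega
      _ ≤ fmax (u ++ List.replicate n v ++ w') := hsum ▸ (hsem _ hne).2 ⟨y, hy, rfl⟩
      _ ≤ (u ++ List.replicate n v ++ w').length := fmax_le_length _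
      _ = n + w.length := by simp only [List.length_append, List.length_replicate]; omega
  have : wgt q v q ≤ 1 := by
    by_contra! h
    have := Nat.mul_le_mul_left n h
    omega
  omega

/-- In a trimmed weighted automaton over the max-plus semiring whose semantics is
`fmax`, every self-loop transition has weight `0` or `1`. -/
theorem selfLoop_weight_le_one [Fintype Q] (Δ : Q → ABC → Q → Prop)
    (wgt : Q → ABC → Q → ℕ) (I F : Set Q)
    (htrim : ∀ q : Q, ∃ (w : List ABC) (x : Q × List Q),
      x ∈ AccRuns Δ I F w ∧ q ∈ x.1 :: x.2)
    (hsem : ∀ w : List ABC, w ≠ [] →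
      IsGreatest {v : ℕ | ∃ x ∈ AccRuns Δ I F w, (wgtSeq wgt x.1 w x.2).sum = v}
        (fmax w)) :
    ∀ (q : Q) (v : ABC), Δ q v q → wgt q v q = 0 ∨ wgt q v q = 1 :=
  selfLoop_weight_le_one_general Δ wgt I F htrim hsem
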